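/- arXiv:2511.19678 — 2 statements merged into one kernel-verified Lean document; each statement's English description precedes it below -/
import Mathlib

section
/- Let d and k be positive integers and let w be a word with at least two distinct letters that is d-stackable. Let w^{(k)} denote the word obtained from w by replacing each letter of w by k consecutive copies of that letter (so len(w^{(k)}) = k·len(w)). Then w^{(k)} is d-stackable: C_d(w^{(k)}) = 3^{d−1}·C_1(w^{(k)}). -/
open scoped BigOperators

namespace WordGrid

variable {α : Type*}

/-- A valid word-search direction in dimension `d`: a nonzero vector with
entries in `{-1, 0, 1}`. -/
def IsDir (d : ℕ) (v : Fin d → ℤ) : Prop :=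
  (∀ i, v i = -1 ∨ v i = 0 ∨ v i = 1) ∧ v ≠ 0

/-- `(p, v)` is an appearance of the word `w` in the grid `Γ` of shape
`ZMod (n 0) × ⋯ × ZMod (n (d-1))`: reading from `p` in direction `v`
(reduced coordinatewise into the shape group) spells out `w`. -/
def Appears {d : ℕ} (n : Fin d → ℕ) (Γ : (∀ i, ZMod (n i)) → α) (w : List α)
    (p : ∀ i, ZMod (n i)) (v : Fin d → ℤ) : Prop :=
  IsDir d v ∧
    ∀ k : Fin w.length, Γ (fun j => p j + (((k : ℤ) * v j : ℤ) : ZMod (n j))) = w.get k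

/-- The number of appearances of the word `w` in the grid `Γ`. -/
noncomputable def count {d : ℕ} (n : Fin d → ℕ) (Γ : (∀ i, ZMod (n i)) → α)
    (w : List α) : ℕ :=
  Set.ncard {pv : (∀ i, ZMod (n i)) × (Fin d → ℤ) | Appears n Γ w pv.1 pv.2}

/-- The concentration of the word `w` in the grid `Γ`: the number of
appearances divided by the size of the grid. -/
noncomputable def conc {d : ℕ} (n : Fin d → ℕ) (Γ : (∀ i, ZMod (n i)) → α)
    (w : List α) : ℝ :=
  (count n Γ w : ℝ) / ((∏ i, n i : ℕ) : ℝ)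

/-- `C d w`: the supremum of the concentration of `w` over all `d`-dimensional
grids (of all shapes with every side length positive). -/
noncomputable def C (d : ℕ) (w : List α) : ℝ :=
  sSup {x : ℝ | ∃ (n : Fin d → ℕ) (Γ : (∀ i, ZMod (n i)) → α),
    (∀ i, 0 < n i) ∧ x = conc n Γ w}

/-- The word `w` contains at least two distinct letters. -/
def TwoLetters (w : List α) : Prop := ∃ x ∈ w, ∃ y ∈ w, x ≠ y


lemma rep_length (k : ℕ) (w : List α) :
    (w.flatMap fun a => List.replicate k a).length = k * w.length := by
  induction w with
  | nil => simp
  | cons a w ih => simp [ih, Nat.mul_succ, Nat.add_comm]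

lemma rep_get (k : ℕ) (hk : 0 < k) (w : List α) (t : ℕ) (ht : t < k * w.length) :
    (w.flatMap fun a => List.replicate k a)[t]'(by rw [rep_length]; exact ht) =
      w[t / k]'(by rwa [Nat.div_lt_iff_lt_mul hk, Nat.mul_comm]) := by
  induction w generalizing t with
  | nil => simp at ht
  | cons a w ih =>
    have hflat : ((a :: w).flatMap fun a => List.replicate k a)
        = List.replicate k a ++ (w.flatMap fun a => List.replicate k a) := by simp
    by_cases h : t < k
    · have h0 : t / k = 0 := Nat.div_eq_of_lt h
      simp only [hflat]
      rw [List.getElem_append_left (by simpa using h)]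
      simp [h0]
    · push_neg at h
      have ht' : t - k < k * w.length := by
        simp only [List.length_cons, Nat.mul_succ] at ht; omega
      have hdiv : t / k = (t - k) / k + 1 := Nat.div_eq_sub_div hk h
      simp only [hflat]
      rw [List.getElem_append_right (by simpa using h)]
      simp only [List.length_replicate]
      rw [ih (t - k) ht']
      simp only [hdiv, List.getElem_cons_succ]

def CSet (d : ℕ) (u : List α) : Set ℝ :=
  {x : ℝ | ∃ (n : Fin d → ℕ) (Γ : (∀ i, ZMod (n i)) → α),
    (∀ i, 0 < n i) ∧ x = conc n Γ u}

lemma C_eq (d : ℕ) (u : List α) : C d u = sSup (CSet d u) := rfl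

lemma count_eq_natCard {d : ℕ} (n : Fin d → ℕ) (Γ : (∀ i, ZMod (n i)) → α) (u : List α) :
    count n Γ u = Nat.card {pv : (∀ i, ZMod (n i)) × (Fin d → ℤ) // Appears n Γ u pv.1 pv.2} :=
  (Nat.card_coe_set_eq _).symm

lemma appears_finite {d : ℕ} (n : Fin d → ℕ) (hn : ∀ i, 0 < n i)
    (Γ : (∀ i, ZMod (n i)) → α) (u : List α) :
    {pv : (∀ i, ZMod (n i)) × (Fin d → ℤ) | Appears n Γ u pv.1 pv.2}.Finite := by
  haveI : ∀ i, NeZero (n i) := fun i => ⟨(hn i).ne'⟩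
  have hV : ({v : Fin d → ℤ | ∀ i, v i = -1 ∨ v i = 0 ∨ v i = 1}).Finite := by
    have hsub : {v : Fin d → ℤ | ∀ i, v i = -1 ∨ v i = 0 ∨ v i = 1} ⊆
        Set.pi Set.univ (fun _ => ({-1, 0, 1} : Set ℤ)) := by
      intro v hv i _
      rcases hv i with h | h | h <;> simp [h]
    exact (Set.Finite.pi (fun _ => (Set.finite_singleton _).insert 0 |>.insert (-1))).subset hsub
  refine ((Set.finite_univ.prod hV).subset ?_)
  rintro ⟨p, v⟩ h
  exact ⟨trivial, h.1.1⟩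

noncomputable def dirEnc : ℤ → Fin 3 := fun z => if z = -1 then 0 else if z = 0 then 1 else 2

lemma dirEnc_inj {a b : ℤ} (ha : a = -1 ∨ a = 0 ∨ a = 1) (hb : b = -1 ∨ b = 0 ∨ b = 1)
    (h : dirEnc a = dirEnc b) : a = b := by
  rcases ha with rfl | rfl | rfl <;> rcases hb with rfl | rfl | rfl <;> simp_all [dirEnc]

lemma count_le {d : ℕ} (n : Fin d → ℕ) (hn : ∀ i, 0 < n i)
    (Γ : (∀ i, ZMod (n i)) → α) (u : List α) :
    count n Γ u ≤ (∏ i, n i) * 3 ^ d := by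
  haveI : ∀ i, NeZero (n i) := fun i => ⟨(hn i).ne'⟩
  rw [count_eq_natCard]
  have h1 : Nat.card {pv : (∀ i, ZMod (n i)) × (Fin d → ℤ) // Appears n Γ u pv.1 pv.2}
      ≤ Nat.card ((∀ i, ZMod (n i)) × (Fin d → Fin 3)) := by
    apply Nat.card_le_card_of_injective
      (fun s => (s.1.1, fun i => dirEnc (s.1.2 i)))
    rintro ⟨⟨p, v⟩, hs⟩ ⟨⟨p', v'⟩, hs'⟩ h
    simp only [Prod.mk.injEq] at h
    obtain ⟨h1, h2⟩ := h
    have hv : v = v' := by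
      funext i
      exact dirEnc_inj (hs.1.1 i) (hs'.1.1 i) (congrFun h2 i)
    simp [h1, hv]
  calc _ ≤ _ := h1
    _ = (∏ i, n i) * 3 ^ d := by
        rw [Nat.card_prod, Nat.card_pi]
        simp [Nat.card_eq_fintype_card, ZMod.card]
  
lemma conc_nonneg {d : ℕ} (n : Fin d → ℕ) (Γ : (∀ i, ZMod (n i)) → α) (u : List α) :
    0 ≤ conc n Γ u := by
  unfold conc; positivity

lemma conc_le {d : ℕ} (n : Fin d → ℕ) (hn : ∀ i, 0 < n i)
    (Γ : (∀ i, ZMod (n i)) → α) (u : List α) :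
    conc n Γ u ≤ (3 : ℝ) ^ d := by
  have hpos : (0 : ℝ) < ((∏ i, n i : ℕ) : ℝ) := by
    have : 0 < ∏ i, n i := Finset.prod_pos (fun i _ => hn i)
    exact_mod_cast this
  rw [conc, div_le_iff₀ hpos]
  calc ((count n Γ u : ℝ)) ≤ (((∏ i, n i) * 3 ^ d : ℕ) : ℝ) := by
        exact_mod_cast count_le n hn Γ u
    _ = (3:ℝ)^d * ((∏ i, n i : ℕ) : ℝ) := by push_cast; ring

lemma CSet_nonempty (d : ℕ) (u : List α) (a : α) : (CSet d u).Nonempty :=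
  ⟨conc (fun _ => 1) (fun _ => a) u, (fun _ => 1), (fun _ => a), fun _ => one_pos, rfl⟩

lemma CSet_bddAbove (d : ℕ) (u : List α) : BddAbove (CSet d u) := by
  refine ⟨(3 : ℝ) ^ d, ?_⟩
  rintro x ⟨n, Γ, hn, rfl⟩
  exact conc_le n hn Γ u

lemma CSet_mem_nonneg {d : ℕ} {u : List α} {x : ℝ} (hx : x ∈ CSet d u) : 0 ≤ x := by
  obtain ⟨n, Γ, hn, rfl⟩ := hx; exact conc_nonneg n Γ u


lemma TwoLetters.length_pos {w : List α} (hw : TwoLetters w) : 0 < w.length := by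
  obtain ⟨x, hx, -⟩ := hw
  exact List.length_pos_iff.2 (List.ne_nil_of_mem hx)

/-- Key rigidity: two appearances of the replicated word along the same direction,
offset by `s • v` with `0 < s < k`, force all letters of `w` to coincide. -/
lemma no_small_shift {d k : ℕ} (hk : 0 < k) {w : List α} (hw : TwoLetters w)
    {n : Fin d → ℕ} {Γ : (∀ i, ZMod (n i)) → α} {p p' : ∀ i, ZMod (n i)} {v : Fin d → ℤ}
    (h : Appears n Γ (w.flatMap fun a => List.replicate k a) p v)
    (h' : Appears n Γ (w.flatMap fun a => List.replicate k a) p' v)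
    {s : ℕ} (hs0 : 0 < s) (hsk : s < k)
    (hp' : ∀ j, p' j = p j + ((s * v j : ℤ) : ZMod (n j))) : False := by
  set w' := w.flatMap fun a => List.replicate k a with hw'
  have hlen : w'.length = k * w.length := rep_length k w
  have ℓpos : 0 < w.length := hw.length_pos
  have claimA : ∀ t, (ht : t + s < k * w.length) →
      w'[t + s]'(by rw [hlen]; exact ht) = w'[t]'(by rw [hlen]; omega) := by
    intro t ht
    have e1 := h.2 ⟨t + s, by rw [hlen]; exact ht⟩
    have e2 := h'.2 ⟨t, by rw [hlen]; omega⟩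
    have harg : (fun j => p j + (((t + s : ℕ) * v j : ℤ) : ZMod (n j)))
        = (fun j => p' j + (((t : ℕ) * v j : ℤ) : ZMod (n j))) := by
      funext j
      rw [hp' j]
      push_cast
      ring_nf
    rw [List.get_eq_getElem] at e1 e2
    simp only [Fin.val_mk] at e1 e2 harg ⊢
    rw [← e1, ← e2]
    exact congrArg Γ (by exact_mod_cast harg)
  have claimB : ∀ t, (ht : t < k * w.length) →
      w'[t]'(by rw [hlen]; exact ht) = w'[0]'(by rw [hlen]; positivity) := by
    intro t
    induction t using Nat.strong_induction_on with
    | _ t ih =>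
      intro ht
      by_cases hts : t < s
      · have h1 : w'[t]'(by rw [hlen]; exact ht) = w[t / k]'(by rwa [Nat.div_lt_iff_lt_mul hk, Nat.mul_comm]) :=
          rep_get k hk w t ht
        have h2 : w'[0]'(by rw [hlen]; positivity) = w[0 / k]'(by simpa using ℓpos) :=
          rep_get k hk w 0 (by positivity)
        have : t / k = 0 := Nat.div_eq_of_lt (lt_trans hts hsk)
        rw [h1, h2]
        simp only [this, Nat.zero_div]
      · push_neg at hts
        have h1 : t - s + s = t := by omega
        have h2 : w'[t - s + s]'(by rw [hlen]; omega) = w'[t - s]'(by rw [hlen]; omega) :=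
          claimA (t - s) (by omega)
        have h3 := ih (t - s) (by omega) (by omega)
        calc w'[t]'(by rw [hlen]; exact ht) = w'[t - s + s]'(by rw [hlen]; omega) := by
              congr 1; omega
          _ = w'[t - s]'(by rw [hlen]; omega) := h2
          _ = _ := h3
  have hconst : ∀ i, (hi : i < w.length) → w[i] = w[0]'ℓpos := by
    intro i hi
    have e1 : w'[k * i]'(by rw [hlen]; exact Nat.mul_lt_mul_left hk |>.2 hi) =
        w[(k * i) / k]'(by rw [Nat.mul_div_cancel_left _ hk]; exact hi) :=
      rep_get k hk w (k * i) (Nat.mul_lt_mul_left hk |>.2 hi)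
    have e2 : w'[0]'(by rw [hlen]; positivity) = w[0 / k]'(by simpa using ℓpos) :=
      rep_get k hk w 0 (by positivity)
    have e3 := claimB (k * i) (Nat.mul_lt_mul_left hk |>.2 hi)
    rw [e1, e2] at e3
    simpa [Nat.mul_div_cancel_left _ hk] using e3
  obtain ⟨x, hx, y, hy, hxy⟩ := hw
  obtain ⟨i, hi, rfl⟩ := List.mem_iff_getElem.1 hx
  obtain ⟨j, hj, rfl⟩ := List.mem_iff_getElem.1 hy
  exact hxy ((hconst i hi).trans (hconst j hj).symm)


lemma offset_inj_half {d k : ℕ} (hk : 0 < k) {w : List α} (hw : TwoLetters w)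
    {n : Fin d → ℕ} {Γ : (∀ i, ZMod (n i)) → α} {p p' : ∀ i, ZMod (n i)} {v : Fin d → ℤ}
    (h : Appears n Γ (w.flatMap fun a => List.replicate k a) p v)
    (h' : Appears n Γ (w.flatMap fun a => List.replicate k a) p' v)
    {r r' : ℕ} (hr : r < k) (hle : r' ≤ r)
    (heq : ∀ j, p j + ((r * v j : ℤ) : ZMod (n j)) = p' j + ((r' * v j : ℤ) : ZMod (n j))) :
    r = r' ∧ p = p' := by
  rcases Nat.eq_or_lt_of_le hle with rfl | hlt
  · refine ⟨rfl, funext fun j => ?_⟩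
    have := heq j
    exact add_right_cancel this
  · exfalso
    refine no_small_shift hk hw h h' (s := r - r') (by omega) (by omega) (fun j => ?_)
    have e := heq j
    push_cast [Nat.cast_sub hle] at e ⊢
    linear_combination -e


lemma offset_inj {d k : ℕ} (hk : 0 < k) {w : List α} (hw : TwoLetters w)
    {n : Fin d → ℕ} {Γ : (∀ i, ZMod (n i)) → α} {p p' : ∀ i, ZMod (n i)} {v : Fin d → ℤ}
    (h : Appears n Γ (w.flatMap fun a => List.replicate k a) p v)
    (h' : Appears n Γ (w.flatMap fun a => List.replicate k a) p' v)
    {r r' : ℕ} (hr : r < k) (hr' : r' < k)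
    (heq : ∀ j, p j + ((r * v j : ℤ) : ZMod (n j)) = p' j + ((r' * v j : ℤ) : ZMod (n j))) :
    r = r' ∧ p = p' := by
  rcases le_total r' r with hle | hle
  · exact offset_inj_half hk hw h h' hr hle heq
  · obtain ⟨h1, h2⟩ := offset_inj_half hk hw h' h hr' hle (fun j => (heq j).symm)
    exact ⟨h1.symm, h2.symm⟩

lemma compress {d k : ℕ} (hk : 0 < k) {w : List α} (hw : TwoLetters w) :
    ∀ x ∈ CSet d (w.flatMap fun a => List.replicate k a),
      ∃ y ∈ CSet d w, (k : ℝ) * x ≤ y := by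
  classical
  rintro x ⟨n, Γ, hn, rfl⟩
  haveI : ∀ i, NeZero (n i) := fun i => ⟨(hn i).ne'⟩
  have hlen : (w.flatMap fun a => List.replicate k a).length = k * w.length := rep_length k w
  let Δ : (∀ i, ZMod (n i)) → (∀ i, ZMod (n i)) → α :=
    fun c q => Γ (fun j => (k : ZMod (n j)) * q j + c j)
  suffices hc : ∃ c, k * count n Γ (w.flatMap fun a => List.replicate k a) ≤ count n (Δ c) w by
    obtain ⟨c, hc⟩ := hc
    refine ⟨conc n (Δ c) w, ⟨n, Δ c, hn, rfl⟩, ?_⟩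
    have hP : (0:ℝ) < ((∏ i, n i : ℕ) : ℝ) := by
      have : 0 < ∏ i, n i := Finset.prod_pos (fun i _ => hn i)
      exact_mod_cast this
    unfold conc
    rw [← mul_div_assoc]
    gcongr
    exact_mod_cast hc
  let T : (∀ i, ZMod (n i)) → Set ((∀ i, ZMod (n i)) × (Fin d → ℤ)) :=
    fun c => {pv | Appears n (Δ c) w pv.1 pv.2}
  haveI hTfin : ∀ c, Finite ↥(T c) := fun c => ((appears_finite n hn (Δ c) w).to_subtype)
  let S : Set ((∀ i, ZMod (n i)) × (Fin d → ℤ)) :=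
    {pv | Appears n Γ (w.flatMap fun a => List.replicate k a) pv.1 pv.2}
  let cOf : (↥S × Fin k × (∀ i, ZMod (n i))) → (∀ i, ZMod (n i)) := fun z =>
    fun j => z.1.1.1 j + (((z.2.1 : ℕ) * z.1.1.2 j : ℤ) : ZMod (n j)) - (k : ZMod (n j)) * z.2.2 j
  have hmem : ∀ z : ↥S × Fin k × (∀ i, ZMod (n i)), (z.2.2, z.1.1.2) ∈ T (cOf z) := by
    rintro ⟨⟨⟨p, v⟩, hpv⟩, r, q⟩
    have happ : Appears n Γ (w.flatMap fun a => List.replicate k a) p v := hpv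
    refine ⟨happ.1, ?_⟩
    intro i
    have hb : k * (i : ℕ) + (r : ℕ) < (w.flatMap fun a => List.replicate k a).length := by
      rw [hlen]
      have h1 : k * ((i : ℕ) + 1) ≤ k * w.length := Nat.mul_le_mul_left _ (by omega)
      rw [Nat.mul_succ] at h1
      have := r.isLt
      omega
    have harg : (fun j => (k : ZMod (n j)) * (q j + (((i : ℤ) * v j : ℤ) : ZMod (n j))) + cOf ⟨⟨⟨p, v⟩, hpv⟩, r, q⟩ j)
        = (fun j => p j + ((((k * (i : ℕ) + (r : ℕ) : ℕ) : ℤ) * v j : ℤ) : ZMod (n j))) := by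
      funext j
      show (k : ZMod (n j)) * (q j + (((i : ℤ) * v j : ℤ) : ZMod (n j)))
          + (p j + (((r : ℕ) * v j : ℤ) : ZMod (n j)) - (k : ZMod (n j)) * q j)
          = p j + ((((k * (i : ℕ) + (r : ℕ) : ℕ) : ℤ) * v j : ℤ) : ZMod (n j))
      push_cast
      ring
    have e1 := happ.2 ⟨k * (i : ℕ) + (r : ℕ), hb⟩
    have e2 : (w.flatMap fun a => List.replicate k a)[k * (i : ℕ) + (r : ℕ)]'hb
        = w[(k * (i : ℕ) + (r : ℕ)) / k]'(by
            rw [Nat.mul_add_div hk, Nat.div_eq_of_lt r.isLt]; simpa using i.isLt) :=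
      rep_get k hk w _ (by rw [← hlen]; exact hb)
    have hdiv : (k * (i : ℕ) + (r : ℕ)) / k = (i : ℕ) := by
      rw [Nat.mul_add_div hk, Nat.div_eq_of_lt r.isLt]
      omega
    show Δ (cOf ⟨⟨⟨p, v⟩, hpv⟩, r, q⟩) (fun j => q j + (((i : ℤ) * v j : ℤ) : ZMod (n j))) = w.get i
    show Γ (fun j => (k : ZMod (n j)) * (q j + (((i : ℤ) * v j : ℤ) : ZMod (n j)))
        + cOf ⟨⟨⟨p, v⟩, hpv⟩, r, q⟩ j) = w.get i
    rw [harg]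
    rw [List.get_eq_getElem] at e1 ⊢
    simp only [Fin.val_mk] at e1
    rw [show (((⟨k * (i : ℕ) + (r : ℕ), hb⟩ : Fin _) : ℤ)) = ((k * (i : ℕ) + (r : ℕ) : ℕ) : ℤ) from rfl] at e1
    rw [e1, e2]
    try (congr 1; try exact hdiv)
  let Φ : (↥S × Fin k × (∀ i, ZMod (n i))) → Σ c : (∀ i, ZMod (n i)), ↥(T c) :=
    fun z => ⟨cOf z, ⟨(z.2.2, z.1.1.2), hmem z⟩⟩
  have hΦinj : Function.Injective Φ := by
    rintro ⟨⟨⟨p1, v1⟩, hp1⟩, r1, q1⟩ ⟨⟨⟨p2, v2⟩, hp2⟩, r2, q2⟩ heqz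
    have hc : cOf ⟨⟨⟨p1, v1⟩, hp1⟩, r1, q1⟩ = cOf ⟨⟨⟨p2, v2⟩, hp2⟩, r2, q2⟩ :=
      congrArg Sigma.fst heqz
    have hqv : ((q1, v1) : ((∀ i, ZMod (n i)) × (Fin d → ℤ))) = (q2, v2) :=
      congrArg (fun s : (Σ c : (∀ i, ZMod (n i)), ↥(T c)) =>
        (s.2.1 : ((∀ i, ZMod (n i)) × (Fin d → ℤ)))) heqz
    have hq : q1 = q2 := congrArg Prod.fst hqv
    have hv : v1 = v2 := congrArg Prod.snd hqv
    have heqj : ∀ j, p1 j + (((r1 : ℕ) * v1 j : ℤ) : ZMod (n j))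
        = p2 j + (((r2 : ℕ) * v1 j : ℤ) : ZMod (n j)) := by
      intro j
      have hthis : p1 j + (((r1 : ℕ) * v1 j : ℤ) : ZMod (n j)) - (k : ZMod (n j)) * q1 j
          = p2 j + (((r2 : ℕ) * v2 j : ℤ) : ZMod (n j)) - (k : ZMod (n j)) * q2 j :=
        congrFun hc j
      rw [← hq, ← hv] at hthis
      have := sub_left_inj.mp hthis
      rw [hv]
      rw [hv] at this
      exact this
    have h1' : Appears n Γ (w.flatMap fun a => List.replicate k a) p1 v1 := hp1
    have h2' : Appears n Γ (w.flatMap fun a => List.replicate k a) p2 v1 := by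
      rw [hv]; exact hp2
    obtain ⟨hr12, hp12⟩ := offset_inj hk hw h1' h2' r1.isLt r2.isLt heqj
    simp only [Prod.mk.injEq, Subtype.mk.injEq]
    exact ⟨⟨hp12, hv⟩, Fin.ext hr12, hq⟩
  have hcard : Nat.card (↥S × Fin k × (∀ i, ZMod (n i)))
      ≤ Nat.card (Σ c : (∀ i, ZMod (n i)), ↥(T c)) :=
    Nat.card_le_card_of_injective Φ hΦinj
  haveI hTfin' : ∀ c, Fintype ↥(T c) := fun c => (appears_finite n hn (Δ c) w).fintype
  have hL : Nat.card (↥S × Fin k × (∀ i, ZMod (n i)))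
      = count n Γ (w.flatMap fun a => List.replicate k a) * (k * Fintype.card (∀ i, ZMod (n i))) := by
    have hS : Nat.card ↥S = count n Γ (w.flatMap fun a => List.replicate k a) :=
      (count_eq_natCard n Γ _).symm
    rw [Nat.card_prod, Nat.card_prod, hS, Nat.card_eq_fintype_card,
      Nat.card_eq_fintype_card, Fintype.card_fin]
  have hR : Nat.card (Σ c : (∀ i, ZMod (n i)), ↥(T c)) = ∑ c : (∀ i, ZMod (n i)), count n (Δ c) w := by
    have h1 : ∀ c, count n (Δ c) w = Nat.card ↥(T c) := fun c => count_eq_natCard n (Δ c) w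
    rw [Nat.card_eq_fintype_card, Fintype.card_sigma]
    refine (Finset.sum_congr rfl (fun c _ => ?_)).symm
    rw [h1 c, Nat.card_eq_fintype_card]
  by_contra hcon
  push_neg at hcon
  have hlt : ∑ c : (∀ i, ZMod (n i)), count n (Δ c) w
      < ∑ _c : (∀ i, ZMod (n i)), k * count n Γ (w.flatMap fun a => List.replicate k a) :=
    Finset.sum_lt_sum_of_nonempty Finset.univ_nonempty (fun c _ => hcon c)
  rw [Finset.sum_const, Finset.card_univ, smul_eq_mul] at hlt
  rw [hL, hR] at hcard
  have hcomm : Fintype.card (∀ i, ZMod (n i)) * (k * count n Γ (w.flatMap fun a => List.replicate k a))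
      = count n Γ (w.flatMap fun a => List.replicate k a) * (k * Fintype.card (∀ i, ZMod (n i))) := by
    ring
  rw [hcomm] at hlt
  exact lt_irrefl _ (lt_of_le_of_lt hcard hlt)

def dirDec : Fin 3 → ℤ := ![(-1 : ℤ), 0, 1]

lemma dirDec_mem (a : Fin 3) : dirDec a = -1 ∨ dirDec a = 0 ∨ dirDec a = 1 := by
  fin_cases a <;> simp [dirDec]

lemma dirDec_injective : Function.Injective dirDec := by
  decide

lemma stack {d : ℕ} (hd : 0 < d) (u : List α) :
    ∀ x ∈ CSet 1 u, ∃ y ∈ CSet d u, (3 : ℝ) ^ (d - 1) * x ≤ y := by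
  classical
  rintro x ⟨n, Γ, hn, rfl⟩
  obtain ⟨d', rfl⟩ : ∃ d', d = d' + 1 := ⟨d - 1, (Nat.succ_pred_eq_of_pos hd).symm⟩
  haveI : ∀ i : Fin 1, NeZero (n i) := fun i => ⟨(hn i).ne'⟩
  haveI : NeZero (n 0) := ⟨(hn 0).ne'⟩
  let m : Fin (d' + 1) → ℕ := fun _ => n 0
  have hm : ∀ i, 0 < m i := fun _ => hn 0
  haveI : ∀ i, NeZero (m i) := fun i => ⟨(hm i).ne'⟩
  let Δ : (∀ i : Fin (d' + 1), ZMod (m i)) → α :=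
    fun q => Γ (Fin.cases (q 0) finZeroElim)
  refine ⟨conc m Δ u, ⟨m, Δ, hm, rfl⟩, ?_⟩
  -- the injection
  let S1 : Set ((∀ i : Fin 1, ZMod (n i)) × (Fin 1 → ℤ)) := {pv | Appears n Γ u pv.1 pv.2}
  let SD : Set ((∀ i : Fin (d' + 1), ZMod (m i)) × (Fin (d' + 1) → ℤ)) :=
    {pv | Appears m Δ u pv.1 pv.2}
  let E := Fin d' → (Fin 3 × ZMod (n 0))
  have hvne : ∀ {v : Fin 1 → ℤ}, v ≠ 0 → v 0 ≠ 0 := by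
    intro v hv h0
    apply hv
    funext j
    rw [Fin.eq_zero j, h0]
    rfl
  have hmem : ∀ (z : ↥S1 × E),
      (Fin.cons ((z.1 : ((∀ i : Fin 1, ZMod (n i)) × (Fin 1 → ℤ))).1 0) (fun j => (z.2 j).2),
        Fin.cons ((z.1 : ((∀ i : Fin 1, ZMod (n i)) × (Fin 1 → ℤ))).2 0) (fun j => dirDec (z.2 j).1)) ∈ SD := by
    rintro ⟨⟨⟨p, v⟩, hpv⟩, e⟩
    have happ : Appears n Γ u p v := hpv
    constructor
    · constructor
      · intro i
        refine Fin.cases ?_ ?_ i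
        · simpa using happ.1.1 0
        · intro j
          simpa using dirDec_mem (e j).1
      · intro hV
        exact hvne happ.1.2 (by simpa using congrFun hV 0)
    · intro t
      have e1 := happ.2 t
      show Γ _ = u.get t
      rw [← e1]
      congr 1
      funext j
      rw [Fin.eq_zero j]
      simp [Fin.cons_zero]
  let Φ : (↥S1 × E) → ↥SD := fun z =>
    ⟨(Fin.cons ((z.1 : ((∀ i : Fin 1, ZMod (n i)) × (Fin 1 → ℤ))).1 0) (fun j => (z.2 j).2),
      Fin.cons ((z.1 : ((∀ i : Fin 1, ZMod (n i)) × (Fin 1 → ℤ))).2 0) (fun j => dirDec (z.2 j).1)), hmem z⟩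
  have hΦinj : Function.Injective Φ := by
    rintro ⟨⟨⟨p1, v1⟩, hp1⟩, e1⟩ ⟨⟨⟨p2, v2⟩, hp2⟩, e2⟩ heqz
    have hP : Fin.cons (p1 0) (fun j => (e1 j).2)
        = (Fin.cons (p2 0) (fun j => (e2 j).2) : ∀ i : Fin (d' + 1), ZMod (m i)) :=
      congrArg (fun s : ↥SD => (s : ((∀ i : Fin (d' + 1), ZMod (m i)) × (Fin (d' + 1) → ℤ))).1) heqz
    have hV : Fin.cons (v1 0) (fun j => dirDec (e1 j).1)
        = (Fin.cons (v2 0) (fun j => dirDec (e2 j).1) : Fin (d' + 1) → ℤ) :=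
      congrArg (fun s : ↥SD => (s : ((∀ i : Fin (d' + 1), ZMod (m i)) × (Fin (d' + 1) → ℤ))).2) heqz
    have hp0 : p1 0 = p2 0 := by simpa using congrFun hP 0
    have hv0 : v1 0 = v2 0 := by simpa using congrFun hV 0
    have hp : p1 = p2 := by
      funext j; rw [Fin.eq_zero j]; exact hp0
    have hv : v1 = v2 := by
      funext j; rw [Fin.eq_zero j]; exact hv0
    have he : e1 = e2 := by
      funext j
      have h2 : (e1 j).2 = (e2 j).2 := by simpa using congrFun hP j.succ
      have h1 : dirDec (e1 j).1 = dirDec (e2 j).1 := by simpa using congrFun hV j.succ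
      exact Prod.ext (dirDec_injective h1) h2
    simp only [Prod.mk.injEq, Subtype.mk.injEq]
    exact ⟨⟨hp, hv⟩, he⟩
  haveI : Finite ↥SD := (appears_finite m hm Δ u).to_subtype
  have hcard : Nat.card (↥S1 × E) ≤ Nat.card ↥SD :=
    Nat.card_le_card_of_injective Φ hΦinj
  have hE : Nat.card E = (3 * n 0) ^ d' := by
    have h' : Nat.card (Fin d' → Fin 3 × ZMod (n 0)) = (3 * n 0) ^ d' := by
      rw [Nat.card_eq_fintype_card]
      simp [Fintype.card_fun, Fintype.card_prod, ZMod.card]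
    exact h'
  have hS1 : Nat.card ↥S1 = count n Γ u := (count_eq_natCard n Γ u).symm
  have hSD : Nat.card ↥SD = count m Δ u := (count_eq_natCard m Δ u).symm
  rw [Nat.card_prod, hS1, hE, hSD] at hcard
  -- arithmetic
  have hprod1 : (∏ i : Fin 1, n i) = n 0 := by simp
  have hprodm : (∏ i : Fin (d' + 1), m i) = n 0 ^ (d' + 1) := by
    simp [m, Finset.prod_const]
  have hN : (0 : ℝ) < (n 0 : ℝ) := by exact_mod_cast hn 0
  unfold conc
  rw [hprod1, hprodm]
  have hNp : (0 : ℝ) < ((n 0 ^ (d' + 1) : ℕ) : ℝ) := by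
    have : 0 < n 0 ^ (d' + 1) := pow_pos (hn 0) _
    exact_mod_cast this
  have hexp : (d' + 1) - 1 = d' := rfl
  rw [hexp, ← mul_div_assoc, div_le_div_iff₀ hN hNp]
  have hc' : ((count n Γ u : ℝ)) * ((3 : ℝ) * (n 0 : ℝ)) ^ d' ≤ (count m Δ u : ℝ) := by
    calc ((count n Γ u : ℝ)) * ((3 : ℝ) * (n 0 : ℝ)) ^ d'
        = ((count n Γ u * (3 * n 0) ^ d' : ℕ) : ℝ) := by push_cast; ring
      _ ≤ _ := by exact_mod_cast hcard
  calc (3 : ℝ) ^ d' * (count n Γ u : ℝ) * ((n 0 ^ (d' + 1) : ℕ) : ℝ)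
      = ((count n Γ u : ℝ) * ((3 : ℝ) * (n 0 : ℝ)) ^ d') * (n 0 : ℝ) := by
        push_cast
        rw [mul_pow, pow_succ]
        ring
    _ ≤ (count m Δ u : ℝ) * (n 0 : ℝ) := mul_le_mul_of_nonneg_right hc' hN.le

lemma val_div_cast {k N : ℕ} (hk : 0 < k) (hN : 0 < N) (a : ℤ) :
    ((((a : ZMod (k * N)).val / k : ℕ)) : ZMod N) = ((a / (k : ℤ) : ℤ) : ZMod N) := by
  haveI : NeZero (k * N) := ⟨(Nat.mul_pos hk hN).ne'⟩
  have hval : (((a : ZMod (k * N)).val : ℤ)) = a % ((k * N : ℕ) : ℤ) := ZMod.val_intCast a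
  set q : ℤ := a / ((k * N : ℕ) : ℤ) with hqdef
  have hq : a = ((a : ZMod (k * N)).val : ℤ) + (k : ℤ) * ((N : ℤ) * q) := by
    rw [hval, hqdef, ← mul_assoc,
      show (k : ℤ) * (N : ℤ) = ((k * N : ℕ) : ℤ) by push_cast; ring]
    have h2 := Int.mul_ediv_add_emod a ((k * N : ℕ) : ℤ)
    linarith
  have hdiv : a / (k : ℤ) = (((a : ZMod (k * N)).val : ℤ)) / (k : ℤ) + (N : ℤ) * q := by
    conv_lhs => rw [hq]
    rw [Int.add_mul_ediv_left _ _ (by exact_mod_cast hk.ne' : (k : ℤ) ≠ 0)]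
  have hnatdiv : (((a : ZMod (k * N)).val / k : ℕ) : ℤ) = (((a : ZMod (k * N)).val : ℤ)) / (k : ℤ) :=
    Int.natCast_ediv _ _
  calc (((a : ZMod (k * N)).val / k : ℕ) : ZMod N)
      = (((((a : ZMod (k * N)).val / k : ℕ) : ℤ)) : ZMod N) := (Int.cast_natCast _).symm
    _ = ((a / (k : ℤ) - (N : ℤ) * q : ℤ) : ZMod N) := by rw [hnatdiv]; rw [hdiv]; ring_nf
    _ = ((a / (k : ℤ) : ℤ) : ZMod N) := by push_cast; simp


lemma blowup {k : ℕ} (hk : 0 < k) (w : List α) :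
    ∀ x ∈ CSet 1 w, ∃ y ∈ CSet 1 (w.flatMap fun a => List.replicate k a), x ≤ (k : ℝ) * y := by
  classical
  rintro x ⟨n, Γ, hn, rfl⟩
  haveI : ∀ i : Fin 1, NeZero (n i) := fun i => ⟨(hn i).ne'⟩
  haveI : NeZero (n 0) := ⟨(hn 0).ne'⟩
  haveI : NeZero (k * n 0) := ⟨(Nat.mul_pos hk (hn 0)).ne'⟩
  have hlen : (w.flatMap fun a => List.replicate k a).length = k * w.length := rep_length k w
  let m : Fin 1 → ℕ := fun _ => k * n 0
  have hm : ∀ i, 0 < m i := fun _ => Nat.mul_pos hk (hn 0)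
  haveI : ∀ i, NeZero (m i) := fun i => ⟨(hm i).ne'⟩
  let Δ : (∀ i : Fin 1, ZMod (m i)) → α :=
    fun q => Γ (Fin.cases ((((q 0).val / k : ℕ) : ZMod (n 0))) finZeroElim)
  refine ⟨conc m Δ (w.flatMap fun a => List.replicate k a), ⟨m, Δ, hm, rfl⟩, ?_⟩
  let S1 : Set ((∀ i : Fin 1, ZMod (n i)) × (Fin 1 → ℤ)) := {pv | Appears n Γ w pv.1 pv.2}
  let SD : Set ((∀ i : Fin 1, ZMod (m i)) × (Fin 1 → ℤ)) :=
    {pv | Appears m Δ (w.flatMap fun a => List.replicate k a) pv.1 pv.2}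
  let del : (Fin 1 → ℤ) → ℕ := fun v => if v 0 = 1 then 0 else k - 1
  have hdel_lt : ∀ v, del v < k := by
    intro v
    by_cases h : v 0 = 1 <;> simp [del, h] <;> omega
  let Pof : ((∀ i : Fin 1, ZMod (n i)) × (Fin 1 → ℤ)) → (∀ i : Fin 1, ZMod (m i)) := fun pv =>
    Fin.cases (((k * (pv.1 0).val + del pv.2 : ℕ) : ZMod (k * n 0))) finZeroElim
  have hvpm : ∀ {v : Fin 1 → ℤ}, IsDir 1 v → v 0 = 1 ∨ v 0 = -1 := by
    intro v hv
    have h0 : v 0 ≠ 0 := by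
      intro h0
      apply hv.2
      funext j; rw [Fin.eq_zero j]; exact h0
    rcases hv.1 0 with h | h | h
    · exact Or.inr h
    · exact absurd h h0
    · exact Or.inl h
  have hkey : ∀ (p : ∀ i : Fin 1, ZMod (n i)) (v : Fin 1 → ℤ), IsDir 1 v → ∀ t : ℕ,
      ((((Pof (p, v) 0 + ((t * v 0 : ℤ) : ZMod (k * n 0))).val / k : ℕ)) : ZMod (n 0))
        = p 0 + (((t / k : ℕ) : ℤ) * v 0 : ℤ) := by
    intro p v hv t
    have hP0 : Pof (p, v) 0 = ((k * (p 0).val + del v : ℕ) : ZMod (k * n 0)) := rfl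
    have hcast : Pof (p, v) 0 + ((t * v 0 : ℤ) : ZMod (k * n 0))
        = (((k * (p 0).val + del v : ℕ) + t * v 0 : ℤ) : ZMod (k * n 0)) := by
      rw [hP0]; push_cast; ring
    rw [hcast, val_div_cast hk (hn 0)]
    have hAdiv : (((k * (p 0).val + del v : ℕ) : ℤ) + t * v 0) / (k : ℤ)
        = ((p 0).val : ℤ) + ((t / k : ℕ) : ℤ) * v 0 := by
      have hknz : (k : ℤ) ≠ 0 := by exact_mod_cast hk.ne'
      rcases hvpm hv with h1 | h1
      · have hd : del v = 0 := by simp [del, h1]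
        rw [h1, hd]
        have : ((k * (p 0).val + 0 : ℕ) : ℤ) + (t : ℤ) * 1 = (t : ℤ) + (k : ℤ) * ((p 0).val : ℤ) := by
          push_cast; ring
        rw [this, Int.add_mul_ediv_left _ _ hknz, ← Int.natCast_ediv]
        push_cast; ring
      · have hd : del v = k - 1 := by
          have : v 0 ≠ 1 := by rw [h1]; decide
          simp [del, this]
        set a := t / k with ha
        set b := t % k with hb
        have hab : t = k * a + b := (Nat.div_add_mod t k).symm
        have hblt : b < k := Nat.mod_lt _ hk
        rw [h1, hd]
        have hrw : ((k * (p 0).val + (k - 1) : ℕ) : ℤ) + (t : ℤ) * (-1)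
            = ((k : ℤ) - 1 - (b : ℤ)) + (k : ℤ) * (((p 0).val : ℤ) - (a : ℤ)) := by
          push_cast [Nat.cast_sub (Nat.one_le_iff_ne_zero.mpr hk.ne')]
          have : (t : ℤ) = (k : ℤ) * (a : ℤ) + (b : ℤ) := by exact_mod_cast hab
          rw [this]; ring
        rw [hrw, Int.add_mul_ediv_left _ _ hknz,
          Int.ediv_eq_zero_of_lt (by omega) (by omega)]
        ring
    rw [hAdiv]
    push_cast
    simp [ZMod.natCast_val, ZMod.cast_id]
  have hmem : ∀ pv : ((∀ i : Fin 1, ZMod (n i)) × (Fin 1 → ℤ)), pv ∈ S1 →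
      (Pof pv, pv.2) ∈ SD := by
    rintro ⟨p, v⟩ hpv
    have happ : Appears n Γ w p v := hpv
    refine ⟨happ.1, ?_⟩
    intro t
    have htl : (t : ℕ) < k * w.length := by rw [← hlen]; exact t.isLt
    have htk : (t : ℕ) / k < w.length := by rwa [Nat.div_lt_iff_lt_mul hk, Nat.mul_comm]
    show Γ (Fin.cases ((((Pof (p, v) 0 + (((t : ℤ) * v 0 : ℤ) : ZMod (k * n 0))).val / k : ℕ)) : ZMod (n 0)) finZeroElim)
        = (w.flatMap fun a => List.replicate k a).get t
    rw [hkey p v happ.1 t]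
    have e1 := happ.2 ⟨(t : ℕ) / k, htk⟩
    have harg : (Fin.cases (p 0 + ((((t : ℕ) / k : ℕ) : ℤ) * v 0 : ℤ)) finZeroElim :
          ∀ i : Fin 1, ZMod (n i))
        = fun j => p j + (((((⟨(t : ℕ) / k, htk⟩ : Fin w.length) : ℕ) : ℤ) * v j : ℤ) : ZMod (n j)) := by
      funext j
      rw [Fin.eq_zero j]
      simp
    rw [harg, e1, List.get_eq_getElem, List.get_eq_getElem]
    simp only [Fin.val_mk]
    exact (rep_get k hk w (t : ℕ) htl).symm
  let Φ : ↥S1 → ↥SD := fun s => ⟨(Pof s.1, (s.1 : _ × _).2), hmem s.1 s.2⟩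
  have hΦinj : Function.Injective Φ := by
    rintro ⟨⟨p1, v1⟩, hp1⟩ ⟨⟨p2, v2⟩, hp2⟩ heqz
    have hP : Pof (p1, v1) = Pof (p2, v2) :=
      congrArg (fun s : ↥SD => (s : ((∀ i : Fin 1, ZMod (m i)) × (Fin 1 → ℤ))).1) heqz
    have hV : v1 = v2 :=
      congrArg (fun s : ↥SD => (s : ((∀ i : Fin 1, ZMod (m i)) × (Fin 1 → ℤ))).2) heqz
    have hP0 : ((k * (p1 0).val + del v1 : ℕ) : ZMod (k * n 0))
        = ((k * (p2 0).val + del v2 : ℕ) : ZMod (k * n 0)) := congrFun hP 0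
    have hbound : ∀ (p : ∀ i : Fin 1, ZMod (n i)) (v : Fin 1 → ℤ),
        k * (p 0).val + del v < k * n 0 := by
      intro p v
      have h1 : (p 0).val + 1 ≤ n 0 := (ZMod.val_lt (p 0))
      calc k * (p 0).val + del v < k * (p 0).val + k := by have := hdel_lt v; omega
        _ = k * ((p 0).val + 1) := by ring
        _ ≤ k * n 0 := Nat.mul_le_mul_left _ h1
    have hnat : k * (p1 0).val + del v1 = k * (p2 0).val + del v2 := by
      have := congrArg ZMod.val hP0
      rwa [ZMod.val_cast_of_lt (hbound p1 v1), ZMod.val_cast_of_lt (hbound p2 v2)] at this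
    have hval : (p1 0).val = (p2 0).val := by
      rw [hV] at hnat
      have := Nat.add_right_cancel hnat
      exact Nat.eq_of_mul_eq_mul_left hk this
    have hp0 : p1 0 = p2 0 := ZMod.val_injective _ hval
    have hp : p1 = p2 := by funext j; rw [Fin.eq_zero j]; exact hp0
    simp only [Subtype.mk.injEq, Prod.mk.injEq]
    exact ⟨hp, hV⟩
  haveI : Finite ↥SD := (appears_finite m hm Δ _).to_subtype
  have hcard : Nat.card ↥S1 ≤ Nat.card ↥SD := Nat.card_le_card_of_injective Φ hΦinj
  have hS1 : Nat.card ↥S1 = count n Γ w := (count_eq_natCard n Γ w).symm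
  have hSD : Nat.card ↥SD = count m Δ (w.flatMap fun a => List.replicate k a) :=
    (count_eq_natCard m Δ _).symm
  rw [hS1, hSD] at hcard
  have hprod1 : (∏ i : Fin 1, n i) = n 0 := by simp
  have hprodm : (∏ i : Fin 1, m i) = k * n 0 := by simp [m]
  have hNpos : (0 : ℝ) < ((n 0 : ℕ) : ℝ) := by exact_mod_cast hn 0
  have hkpos : (0 : ℝ) < (k : ℝ) := by exact_mod_cast hk
  unfold conc
  rw [hprod1, hprodm]
  have hrw : (k : ℝ) * ((count m Δ (w.flatMap fun a => List.replicate k a) : ℝ) / ((k * n 0 : ℕ) : ℝ))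
      = (count m Δ (w.flatMap fun a => List.replicate k a) : ℝ) / ((n 0 : ℕ) : ℝ) := by
    push_cast
    field_simp
  rw [hrw]
  gcongr <;> exact_mod_cast hcard

lemma TwoLetters.rep {k : ℕ} (hk : 0 < k) {w : List α} (hw : TwoLetters w) :
    TwoLetters (w.flatMap fun a => List.replicate k a) := by
  obtain ⟨x, hx, y, hy, hxy⟩ := hw
  exact ⟨x, List.mem_flatMap.2 ⟨x, hx, List.mem_replicate.2 ⟨hk.ne', rfl⟩⟩,
    y, List.mem_flatMap.2 ⟨y, hy, List.mem_replicate.2 ⟨hk.ne', rfl⟩⟩, hxy⟩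

theorem statement4 (d k : ℕ) (hd : 0 < d) (hk : 0 < k) (w : List α)
    (hw : TwoLetters w) (hstack : C d w = (3 : ℝ) ^ (d - 1) * C 1 w) :
    C d (w.flatMap fun a => List.replicate k a) =
      (3 : ℝ) ^ (d - 1) * C 1 (w.flatMap fun a => List.replicate k a) := by
  have hw2 : TwoLetters w := hw
  obtain ⟨a, ha, -⟩ := hw2
  have hw' : TwoLetters (w.flatMap fun a => List.replicate k a) := hw.rep hk
  have hkpos : (0 : ℝ) < (k : ℝ) := by exact_mod_cast hk
  have h3pos : (0 : ℝ) < (3 : ℝ) ^ (d - 1) := by positivity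
  have hne1 : (CSet 1 w).Nonempty := CSet_nonempty 1 w a
  have hne1' : (CSet 1 (w.flatMap fun a => List.replicate k a)).Nonempty :=
    CSet_nonempty 1 _ a
  have hneD' : (CSet d (w.flatMap fun a => List.replicate k a)).Nonempty :=
    CSet_nonempty d _ a
  have h_stack : (3 : ℝ) ^ (d - 1) * sSup (CSet 1 (w.flatMap fun a => List.replicate k a))
      ≤ sSup (CSet d (w.flatMap fun a => List.replicate k a)) := by
    rw [mul_comm, ← le_div_iff₀ h3pos]
    refine csSup_le hne1' (fun x hx => ?_)
    obtain ⟨y, hy, hxy⟩ := stack hd (w.flatMap fun a => List.replicate k a) x hx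
    rw [le_div_iff₀ h3pos]
    calc x * (3 : ℝ) ^ (d - 1) = (3 : ℝ) ^ (d - 1) * x := mul_comm _ _
      _ ≤ y := hxy
      _ ≤ _ := le_csSup (CSet_bddAbove d _) hy
  have h_comp : (k : ℝ) * sSup (CSet d (w.flatMap fun a => List.replicate k a))
      ≤ sSup (CSet d w) := by
    rw [mul_comm, ← le_div_iff₀ hkpos]
    refine csSup_le hneD' (fun x hx => ?_)
    obtain ⟨y, hy, hxy⟩ := compress hk hw x hx
    rw [le_div_iff₀ hkpos]
    calc x * (k : ℝ) = (k : ℝ) * x := mul_comm _ _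
      _ ≤ y := hxy
      _ ≤ _ := le_csSup (CSet_bddAbove d w) hy
  have h_blow : sSup (CSet 1 w)
      ≤ (k : ℝ) * sSup (CSet 1 (w.flatMap fun a => List.replicate k a)) := by
    refine csSup_le hne1 (fun x hx => ?_)
    obtain ⟨y, hy, hxy⟩ := blowup hk w x hx
    calc x ≤ (k : ℝ) * y := hxy
      _ ≤ _ := by
          have := le_csSup (CSet_bddAbove 1 (w.flatMap fun a => List.replicate k a)) hy
          exact mul_le_mul_of_nonneg_left this hkpos.le
  have hstack' : sSup (CSet d w) = (3 : ℝ) ^ (d - 1) * sSup (CSet 1 w) := hstack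
  have hup : sSup (CSet d (w.flatMap fun a => List.replicate k a))
      ≤ (3 : ℝ) ^ (d - 1) * sSup (CSet 1 (w.flatMap fun a => List.replicate k a)) := by
    have h2 : (k : ℝ) * sSup (CSet d (w.flatMap fun a => List.replicate k a))
        ≤ (k : ℝ) * ((3 : ℝ) ^ (d - 1) * sSup (CSet 1 (w.flatMap fun a => List.replicate k a))) := by
      calc (k : ℝ) * sSup (CSet d (w.flatMap fun a => List.replicate k a))
          ≤ sSup (CSet d w) := h_comp
        _ = (3 : ℝ) ^ (d - 1) * sSup (CSet 1 w) := hstack'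
        _ ≤ (3 : ℝ) ^ (d - 1) * ((k : ℝ) * sSup (CSet 1 (w.flatMap fun a => List.replicate k a))) :=
            mul_le_mul_of_nonneg_left h_blow h3pos.le
        _ = (k : ℝ) * ((3 : ℝ) ^ (d - 1) * sSup (CSet 1 (w.flatMap fun a => List.replicate k a))) := by
            ring
    exact le_of_mul_le_mul_left h2 hkpos
  exact le_antisymm hup h_stack

end WordGrid
end

section
/- Let d be a positive integer and let ℓ > 1 be an integer all of whose prime factors are at least 2^d. Let A, B be distinct letters. Then the word A B^{ℓ−1} is d-slantable: C_d(A B^{ℓ−1}) = ((3^d − 1)/2)·(2/ℓ). -/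
open scoped BigOperators

namespace WordGrid

variable {α : Type*}

private def dirs (d : ℕ) : Finset (Fin d → ℤ) :=
  (Fintype.piFinset fun _ : Fin d => ({-1, 0, 1} : Finset ℤ)) \ {0}

private lemma mem_dirs {d : ℕ} {v : Fin d → ℤ} : v ∈ dirs d ↔ IsDir d v := by
  simp [dirs, IsDir, Fintype.mem_piFinset]

private lemma card_dirs (d : ℕ) : (dirs d).card = 3 ^ d - 1 := by
  rw [dirs, Finset.card_sdiff_of_subset (by simp [Finset.singleton_subset_iff, Fintype.mem_piFinset])]
  simp [Fintype.card_piFinset]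

private lemma wlen (ℓ : ℕ) (hℓ : 1 < ℓ) (A B : α) :
    (A :: List.replicate (ℓ - 1) B).length = ℓ := by simp; omega

private lemma wget (ℓ : ℕ) (A B : α) (k : Fin (A :: List.replicate (ℓ - 1) B).length) :
    (A :: List.replicate (ℓ - 1) B).get k = if (k : ℕ) = 0 then A else B := by
  rcases k with ⟨k, hk⟩
  cases k with
  | zero => simp
  | succ m => simp [List.getElem_replicate]

private lemma geomsum (m : ℕ) : ∑ i ∈ Finset.range m, (2:ℤ)^i = 2^m - 1 := by
  induction m with
  | zero => simp
  | succ m ih => rw [Finset.sum_range_succ, ih]; ring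

private lemma sbin (m : ℕ) (f : ℕ → ℤ) (hf : ∀ i, f i = -1 ∨ f i = 0 ∨ f i = 1)
    (h : ∑ i ∈ Finset.range m, f i * 2 ^ i = 0) : ∀ i < m, f i = 0 := by
  induction m generalizing f with
  | zero => omega
  | succ m ih =>
    rw [Finset.sum_range_succ'] at h
    have h2 : ∑ i ∈ Finset.range m, f (i + 1) * 2 ^ (i + 1)
        = 2 * ∑ i ∈ Finset.range m, f (i + 1) * 2 ^ i := by
      rw [Finset.mul_sum]; exact Finset.sum_congr rfl fun i _ => by ring
    rw [h2] at h
    have hf0 : f 0 = 0 := by rcases hf 0 with h'|h'|h' <;> omega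
    have hT : ∑ i ∈ Finset.range m, f (i + 1) * 2 ^ i = 0 := by omega
    have := ih (fun i => f (i + 1)) (fun i => hf (i + 1)) hT
    intro i hi
    cases i with
    | zero => exact hf0
    | succ j => exact this j (by omega)

private lemma Une (d : ℕ) (v : Fin d → ℤ) (hv : ∀ i, v i = -1 ∨ v i = 0 ∨ v i = 1)
    (hvne : v ≠ 0) : (∑ i : Fin d, v i * 2 ^ (i : ℕ)) ≠ 0 := by
  intro h0
  set f : ℕ → ℤ := fun i => if h : i < d then v ⟨i, h⟩ else 0 with hf
  have hrange : (∑ i : Fin d, v i * 2 ^ (i : ℕ)) = ∑ i ∈ Finset.range d, f i * 2 ^ i := by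
    rw [Finset.sum_range fun i => f i * 2 ^ i]
    exact Finset.sum_congr rfl fun i _ => by simp [hf, i.isLt]
  have hkey := sbin d f (fun i => by by_cases h : i < d <;> simp [hf, h, hv]) (hrange ▸ h0)
  apply hvne
  funext i
  have := hkey i i.isLt
  simpa [hf, i.isLt] using this

private lemma Ubd (d : ℕ) (v : Fin d → ℤ) (hv : ∀ i, v i = -1 ∨ v i = 0 ∨ v i = 1) :
    (∑ i : Fin d, v i * 2 ^ (i : ℕ)).natAbs < 2 ^ d := by
  have h1 : |∑ i : Fin d, v i * 2 ^ (i:ℕ)| ≤ ∑ i : Fin d, |v i * 2 ^ (i:ℕ)| :=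
    Finset.abs_sum_le_sum_abs _ _
  have h3 : (∑ i : Fin d, |v i * 2 ^ (i:ℕ)|) ≤ ∑ i : Fin d, (2:ℤ) ^ (i:ℕ) := by
    refine Finset.sum_le_sum fun i _ => ?_
    rw [abs_mul, abs_pow]
    rcases hv i with h|h|h <;> simp [h]
  have h4 : (∑ i : Fin d, (2:ℤ) ^ (i:ℕ)) = 2 ^ d - 1 := by
    rw [Fin.sum_univ_eq_sum_range]; exact geomsum d
  have h5 : |∑ i : Fin d, v i * 2 ^ (i:ℕ)| ≤ 2 ^ d - 1 := h4 ▸ le_trans h1 h3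
  rw [Int.abs_eq_natAbs] at h5
  have h6 : ((2:ℤ))^d = ((2^d : ℕ) : ℤ) := by push_cast; ring
  rw [h6] at h5
  omega

private lemma notdvd (d : ℕ) (v : Fin d → ℤ) (hv : ∀ i, v i = -1 ∨ v i = 0 ∨ v i = 1)
    (hvne : v ≠ 0) (ℓ : ℕ) (hℓ : 1 < ℓ) (hfac : ∀ p : ℕ, p.Prime → p ∣ ℓ → 2 ^ d ≤ p)
    (k : ℕ) (hk1 : 1 ≤ k) (hk2 : k < ℓ) :
    ¬ ((ℓ : ℤ) ∣ (k : ℤ) * ∑ i : Fin d, v i * 2 ^ (i : ℕ)) := by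
  set U : ℤ := ∑ i : Fin d, v i * 2 ^ (i : ℕ) with hU
  have hUne : U ≠ 0 := Une d v hv hvne
  have hUbd : U.natAbs < 2 ^ d := Ubd d v hv
  have hcop : Nat.Coprime ℓ U.natAbs := by
    by_contra hnc
    have hp : ((Nat.gcd ℓ U.natAbs).minFac).Prime := Nat.minFac_prime hnc
    have hdℓ : (Nat.gcd ℓ U.natAbs).minFac ∣ ℓ :=
      dvd_trans (Nat.minFac_dvd _) (Nat.gcd_dvd_left _ _)
    have hdU : (Nat.gcd ℓ U.natAbs).minFac ∣ U.natAbs :=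
      dvd_trans (Nat.minFac_dvd _) (Nat.gcd_dvd_right _ _)
    have h2d : 2 ^ d ≤ (Nat.gcd ℓ U.natAbs).minFac := hfac _ hp hdℓ
    have : (Nat.gcd ℓ U.natAbs).minFac ≤ U.natAbs :=
      Nat.le_of_dvd (by omega) hdU
    omega
  intro hdvd
  have hc : IsCoprime (ℓ : ℤ) U := by
    rw [Int.isCoprime_iff_gcd_eq_one]
    exact hcop
  have : (ℓ : ℤ) ∣ (k : ℤ) := hc.dvd_of_dvd_mul_right hdvd
  have : ℓ ∣ k := Int.ofNat_dvd.mp this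
  have := Nat.le_of_dvd (by omega) this
  omega

private lemma key_inj {d : ℕ} {n : Fin d → ℕ} {Γ : (∀ i, ZMod (n i)) → α} {ℓ : ℕ}
    (hℓ : 1 < ℓ) {A B : α} (hAB : A ≠ B)
    {p p' : ∀ i, ZMod (n i)} {v : Fin d → ℤ}
    (h1 : Appears n Γ (A :: List.replicate (ℓ - 1) B) p v)
    (h2 : Appears n Γ (A :: List.replicate (ℓ - 1) B) p' v)
    {i i' : ℕ} (hii' : i ≤ i') (hi' : i' < ℓ)
    (heq : (fun j => p j + (((i : ℤ) * v j : ℤ) : ZMod (n j))) =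
           (fun j => p' j + (((i' : ℤ) * v j : ℤ) : ZMod (n j)))) :
    p = p' ∧ i = i' := by
  set w := A :: List.replicate (ℓ - 1) B with hwdef
  have hw : w.length = ℓ := wlen ℓ hℓ A B
  set j := i' - i with hjdef
  have hi'eq : i' = i + j := by omega
  have hj : j < w.length := by omega
  have hpe : p = fun t => p' t + (((j : ℤ) * v t : ℤ) : ZMod (n t)) := by
    funext t
    have hcf := congrFun heq t
    have hsplit : (((i' : ℤ) * v t : ℤ) : ZMod (n t))
        = (((j : ℤ) * v t : ℤ) : ZMod (n t)) + (((i : ℤ) * v t : ℤ) : ZMod (n t)) := by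
      rw [← Int.cast_add]
      congr 1
      rw [hi'eq]; push_cast; ring
    rw [hsplit, ← add_assoc] at hcf
    exact add_right_cancel hcf
  have h0' : 0 < w.length := by omega
  have hA : Γ p = A := by
    have := h1.2 ⟨0, h0'⟩
    simpa [hwdef] using this
  have h2j : Γ (fun t => p' t + (((j : ℤ) * v t : ℤ) : ZMod (n t))) = w.get ⟨j, hj⟩ :=
    h2.2 ⟨j, hj⟩
  rw [← hpe, hA, wget] at h2j
  have hj0 : j = 0 := by
    by_contra hj0
    rw [if_neg (by simpa using hj0)] at h2j
    exact hAB h2j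
  refine ⟨?_, by omega⟩
  funext t
  have := congrFun hpe t
  rw [hj0] at this
  simpa using this

private lemma count_bound (d ℓ : ℕ) (hℓ : 1 < ℓ) (A B : α) (hAB : A ≠ B)
    (n : Fin d → ℕ) (hn : ∀ i, 0 < n i) (Γ : (∀ i, ZMod (n i)) → α) :
    ℓ * count n Γ (A :: List.replicate (ℓ - 1) B) ≤ (3 ^ d - 1) * ∏ i, n i := by
  classical
  haveI : ∀ i, NeZero (n i) := fun i => ⟨(hn i).ne'⟩
  set w := A :: List.replicate (ℓ - 1) B with hwdef
  set App := {pv : (∀ i, ZMod (n i)) × (Fin d → ℤ) | Appears n Γ w pv.1 pv.2} with hApp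
  have hsub : App ⊆ Set.univ ×ˢ (dirs d : Set (Fin d → ℤ)) := by
    rintro ⟨p, v⟩ h
    exact ⟨trivial, mem_dirs.mpr h.1⟩
  have hfin : App.Finite := (Set.finite_univ.prod (dirs d).finite_toSet).subset hsub
  haveI := hfin.fintype
  have Finj : Function.Injective
      (fun x : ↥App × Fin ℓ =>
        (⟨fun t => (x.1 : (∀ i, ZMod (n i)) × (Fin d → ℤ)).1 t
            + ((((x.2 : ℕ) : ℤ) * (x.1 : (∀ i, ZMod (n i)) × (Fin d → ℤ)).2 t : ℤ) : ZMod (n t)),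
          ⟨(x.1 : (∀ i, ZMod (n i)) × (Fin d → ℤ)).2, mem_dirs.mpr x.1.2.1⟩⟩ :
          (∀ i, ZMod (n i)) × {v : Fin d → ℤ // v ∈ dirs d})) := by
    rintro ⟨⟨⟨p, v⟩, hpv⟩, i⟩ ⟨⟨⟨p', v'⟩, hpv'⟩, i'⟩ h
    simp only [Prod.mk.injEq, Subtype.mk.injEq] at h
    obtain ⟨hfst, hv⟩ := h
    subst hv
    have key : p = p' ∧ (i : ℕ) = (i' : ℕ) := by
      rcases le_or_gt (i : ℕ) (i' : ℕ) with hle | hlt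
      · exact key_inj hℓ hAB hpv hpv' hle i'.isLt hfst
      · have := key_inj hℓ hAB hpv' hpv hlt.le i.isLt hfst.symm
        exact ⟨this.1.symm, this.2.symm⟩
    obtain ⟨hp, hi⟩ := key
    subst hp
    have hii : i = i' := Fin.ext hi
    subst hii
    rfl
  have hcard : count n Γ w = Fintype.card App := by
    rw [count, ← hApp, Set.ncard_eq_toFinset_card', Set.toFinset_card]
  calc ℓ * count n Γ w = Fintype.card (↥App × Fin ℓ) := by
        rw [Fintype.card_prod, Fintype.card_fin, hcard, mul_comm]
    _ ≤ Fintype.card ((∀ i, ZMod (n i)) × {v : Fin d → ℤ // v ∈ dirs d}) :=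
        Fintype.card_le_of_injective _ Finj
    _ = (3 ^ d - 1) * ∏ i, n i := by
        rw [Fintype.card_prod, Fintype.card_coe, card_dirs, Fintype.card_pi, mul_comm]
        congr 1
        exact Finset.prod_congr rfl fun i _ => ZMod.card (n i)

private noncomputable def sfun (d ℓ : ℕ) (p : Fin d → ZMod ℓ) : ZMod ℓ :=
  ∑ i : Fin d, ((2 ^ (i : ℕ) : ℤ) : ZMod ℓ) * p i

private lemma s_shift (d ℓ : ℕ) (p : Fin d → ZMod ℓ) (v : Fin d → ℤ) (k : ℤ) :
    sfun d ℓ (fun j => p j + ((k * v j : ℤ) : ZMod ℓ))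
      = sfun d ℓ p + ((k * ∑ i : Fin d, v i * 2 ^ (i : ℕ) : ℤ) : ZMod ℓ) := by
  unfold sfun
  simp only [mul_add, Finset.sum_add_distrib]
  congr 1
  have h1 : ∀ i : Fin d, ((2 ^ (i : ℕ) : ℤ) : ZMod ℓ) * ((k * v i : ℤ) : ZMod ℓ)
      = ((2 ^ (i : ℕ) * (k * v i) : ℤ) : ZMod ℓ) := fun i => by push_cast; ring
  rw [Finset.sum_congr rfl fun i _ => h1 i, ← Int.cast_sum]
  congr 1
  rw [Finset.mul_sum]
  exact Finset.sum_congr rfl fun i _ => by ring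

private lemma s_update (d ℓ : ℕ) (hd : 0 < d) (p : Fin d → ZMod ℓ) (x : ZMod ℓ) :
    sfun d ℓ (Function.update p ⟨0, hd⟩ x) = sfun d ℓ p + (x - p ⟨0, hd⟩) := by
  unfold sfun
  rw [← Finset.add_sum_erase _ _ (Finset.mem_univ (⟨0, hd⟩ : Fin d)),
    ← Finset.add_sum_erase _ (fun i : Fin d => ((2 ^ (i : ℕ) : ℤ) : ZMod ℓ) * p i)
      (Finset.mem_univ (⟨0, hd⟩ : Fin d))]
  have h2 : ∑ i ∈ Finset.univ.erase (⟨0, hd⟩ : Fin d),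
      ((2 ^ (i : ℕ) : ℤ) : ZMod ℓ) * Function.update p ⟨0, hd⟩ x i
      = ∑ i ∈ Finset.univ.erase (⟨0, hd⟩ : Fin d), ((2 ^ (i : ℕ) : ℤ) : ZMod ℓ) * p i := by
    refine Finset.sum_congr rfl fun i hi => ?_
    rw [Function.update_of_ne (Finset.ne_of_mem_erase hi)]
  rw [h2, Function.update_self]
  push_cast
  ring

private lemma appears_iff (d ℓ : ℕ) (hd : 0 < d) (hℓ : 1 < ℓ)
    (hfac : ∀ p : ℕ, p.Prime → p ∣ ℓ → 2 ^ d ≤ p) (A B : α) (hAB : A ≠ B)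
    (p : Fin d → ZMod ℓ) (v : Fin d → ℤ) :
    Appears (fun _ : Fin d => ℓ) (fun q : Fin d → ZMod ℓ => if sfun d ℓ q = 0 then A else B)
        (A :: List.replicate (ℓ - 1) B) p v
      ↔ IsDir d v ∧ sfun d ℓ p = 0 := by
  classical
  constructor
  · intro h
    refine ⟨h.1, ?_⟩
    have h0 := h.2 ⟨0, by rw [wlen ℓ hℓ]; omega⟩
    have h0' : (if sfun d ℓ p = 0 then A else B) = A := by simpa using h0
    by_cases hs : sfun d ℓ p = 0
    · exact hs
    · rw [if_neg hs] at h0'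
      exact absurd h0'.symm hAB
  · rintro ⟨hdir, hs⟩
    refine ⟨hdir, fun k => ?_⟩
    have hk : (k : ℕ) < ℓ := lt_of_lt_of_eq k.isLt (wlen ℓ hℓ A B)
    rw [wget]
    show (if sfun d ℓ (fun j => p j + ((((k : ℕ) : ℤ) * v j : ℤ) : ZMod ℓ)) = 0 then A else B)
      = if (k : ℕ) = 0 then A else B
    rw [s_shift, hs, zero_add]
    by_cases hk0 : (k : ℕ) = 0
    · rw [if_pos hk0, hk0]
      norm_num
    · rw [if_neg hk0]
      have hne : ((((k : ℕ) : ℤ) * ∑ i : Fin d, v i * 2 ^ (i : ℕ) : ℤ) : ZMod ℓ) ≠ 0 := by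
        rw [Ne, ZMod.intCast_zmod_eq_zero_iff_dvd]
        exact notdvd d v hdir.1 hdir.2 ℓ hℓ hfac (k : ℕ) (by omega) hk
      rw [if_neg hne]

private lemma count_lower (d ℓ : ℕ) (hd : 0 < d) (hℓ : 1 < ℓ)
    (hfac : ∀ p : ℕ, p.Prime → p ∣ ℓ → 2 ^ d ≤ p) (A B : α) (hAB : A ≠ B) :
    count (fun _ : Fin d => ℓ) (fun q : Fin d → ZMod ℓ => if sfun d ℓ q = 0 then A else B)
        (A :: List.replicate (ℓ - 1) B) = (3 ^ d - 1) * ℓ ^ (d - 1) := by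
  classical
  haveI : NeZero ℓ := ⟨by omega⟩
  set w := A :: List.replicate (ℓ - 1) B with hwdef
  have hAppEq : {pv : (Fin d → ZMod ℓ) × (Fin d → ℤ) |
      Appears (fun _ : Fin d => ℓ) (fun q : Fin d → ZMod ℓ => if sfun d ℓ q = 0 then A else B) w pv.1 pv.2}
      = {p : Fin d → ZMod ℓ | sfun d ℓ p = 0} ×ˢ (dirs d : Set (Fin d → ℤ)) := by
    ext ⟨p, v⟩
    rw [Set.mem_setOf_eq, appears_iff d ℓ hd hℓ hfac A B hAB, Set.mem_prod]
    simp only [Set.mem_setOf_eq, Finset.mem_coe, mem_dirs]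
    tauto
  rw [count, hAppEq]
  have hprod : ({p : Fin d → ZMod ℓ | sfun d ℓ p = 0} ×ˢ (dirs d : Set (Fin d → ℤ))).ncard
      = {p : Fin d → ZMod ℓ | sfun d ℓ p = 0}.ncard * (dirs d : Set (Fin d → ℤ)).ncard := by
    rw [← Nat.card_coe_set_eq, ← Nat.card_coe_set_eq, ← Nat.card_coe_set_eq,
      Nat.card_congr (Equiv.Set.prod _ _), Nat.card_prod]
  rw [hprod, Set.ncard_coe_finset, card_dirs]
  have hfib : {p : Fin d → ZMod ℓ | sfun d ℓ p = 0}.ncard = ℓ ^ (d - 1) := by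
    set F0 := Finset.univ.filter (fun p : Fin d → ZMod ℓ => sfun d ℓ p = 0) with hF0
    have hset : {p : Fin d → ZMod ℓ | sfun d ℓ p = 0} = ↑F0 := by
      ext p; simp [hF0]
    rw [hset, Set.ncard_coe_finset]
    have hbij : ∀ c : ZMod ℓ,
        (Finset.univ.filter fun p : Fin d → ZMod ℓ => sfun d ℓ p = c).card = F0.card := by
      intro c
      refine Finset.card_bij' (fun p _ => Function.update p ⟨0, hd⟩ (p ⟨0, hd⟩ - c))
        (fun q _ => Function.update q ⟨0, hd⟩ (q ⟨0, hd⟩ + c)) ?_ ?_ ?_ ?_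
      · intro p hp
        rw [Finset.mem_filter] at hp ⊢
        refine ⟨Finset.mem_univ _, ?_⟩
        rw [s_update d ℓ hd, hp.2]
        ring
      · intro q hq
        rw [Finset.mem_filter] at hq ⊢
        refine ⟨Finset.mem_univ _, ?_⟩
        rw [s_update d ℓ hd, hq.2]
        ring
      · intro p _
        simp [Function.update_idem]
      · intro q _
        simp [Function.update_idem]
    have hcardPt : (Finset.univ : Finset (Fin d → ZMod ℓ)).card = ℓ ^ d := by
      rw [Finset.card_univ, Fintype.card_pi]
      simp [ZMod.card]
    have hsplit := Finset.card_eq_sum_card_fiberwise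
      (s := (Finset.univ : Finset (Fin d → ZMod ℓ))) (t := Finset.univ) (f := sfun d ℓ)
      (fun p _ => Finset.mem_univ _)
    rw [hcardPt] at hsplit
    have hsum : ∑ c : ZMod ℓ, (Finset.univ.filter fun p : Fin d → ZMod ℓ => sfun d ℓ p = c).card
        = ℓ * F0.card := by
      rw [Finset.sum_congr rfl fun c _ => hbij c, Finset.sum_const, Finset.card_univ,
        ZMod.card, smul_eq_mul]
    have hℓd : ℓ * F0.card = ℓ * ℓ ^ (d - 1) := by
      rw [← hsum, ← hsplit, ← pow_succ']
      congr 1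
      omega
    exact Nat.eq_of_mul_eq_mul_left (by omega) hℓd
  rw [hfib, mul_comm]

theorem statement8 (d : ℕ) (hd : 0 < d) (ℓ : ℕ) (hℓ : 1 < ℓ)
    (hfac : ∀ p : ℕ, p.Prime → p ∣ ℓ → 2 ^ d ≤ p)
    (A B : α) (hAB : A ≠ B) :
    C d (A :: List.replicate (ℓ - 1) B) = ((3 : ℝ) ^ d - 1) / 2 * (2 / (ℓ : ℝ)) := by
  classical
  have hl0 : (0 : ℝ) < (ℓ : ℝ) := by exact_mod_cast Nat.lt_of_lt_of_le Nat.zero_lt_one hℓ.le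
  have h3d : (1 : ℕ) ≤ 3 ^ d := Nat.one_le_pow _ _ (by omega)
  set w := A :: List.replicate (ℓ - 1) B with hwdef
  set t : ℝ := ((3 : ℝ) ^ d - 1) / (ℓ : ℝ) with htdef
  set S : Set ℝ := {x : ℝ | ∃ (n : Fin d → ℕ) (Γ : (∀ i, ZMod (n i)) → α),
    (∀ i, 0 < n i) ∧ x = conc n Γ w} with hSdef
  have hub : ∀ x ∈ S, x ≤ t := by
    rintro x ⟨n, Γ, hn, rfl⟩
    have hN : 0 < ∏ i, n i := Finset.prod_pos fun i _ => hn i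
    have hNR : (0 : ℝ) < ((∏ i, n i : ℕ) : ℝ) := by exact_mod_cast hN
    have hcb := count_bound d ℓ hℓ A B hAB n hn Γ
    rw [conc, htdef, div_le_div_iff₀ hNR hl0]
    calc ((count n Γ w : ℕ) : ℝ) * (ℓ : ℝ) = ((ℓ * count n Γ w : ℕ) : ℝ) := by
          push_cast; ring
      _ ≤ (((3 ^ d - 1) * ∏ i, n i : ℕ) : ℝ) := by exact_mod_cast hcb
      _ = ((3 : ℝ) ^ d - 1) * ((∏ i, n i : ℕ) : ℝ) := by
          push_cast [Nat.cast_sub h3d]; ring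
  have hmem : t ∈ S := by
    refine ⟨fun _ => ℓ, fun q : Fin d → ZMod ℓ => if sfun d ℓ q = 0 then A else B,
      fun _ => by show 0 < ℓ; omega, ?_⟩
    rw [conc, count_lower d ℓ hd hℓ hfac A B hAB]
    have hprod : (∏ _i : Fin d, ℓ) = ℓ ^ d := by
      rw [Finset.prod_const, Finset.card_univ, Fintype.card_fin]
    rw [hprod, htdef]
    have hpow : ((ℓ ^ d : ℕ) : ℝ) = (ℓ : ℝ) ^ (d - 1) * (ℓ : ℝ) := by
      push_cast
      rw [← pow_succ]
      congr 1
      omega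
    rw [hpow]
    push_cast [Nat.cast_sub h3d]
    rw [div_mul_eq_div_div, mul_div_assoc, div_self (by positivity), mul_one]
  have hC : C d w = t := by
    rw [C]
    exact le_antisymm (csSup_le ⟨t, hmem⟩ hub) (le_csSup ⟨t, hub⟩ hmem)
  rw [hC, htdef]
  field_simp


end WordGrid
end
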